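/- (Quantitative descent of L per full DMTL-ELM iteration.) Suppose that for every t, τ_t ≥ ρ m (δ + ½) σ_{t,max} − σ/2 and ζ_t ≥ 0. Set c_{t,1} = τ_t + σ/2 − ρ m (δ + ½) σ_{t,max} ≥ 0 and c_{t,2} = ζ_t + σ/2 > 0. Then the DMTL-ELM iterates satisfy, for every k ≥ 0: L(U^k, A^k, λ^k) − L(U^(k+1), A^(k+1), λ^(k+1)) ≥ Σ_t ( c_{t,1}‖U_t^k − U_t^(k+1)‖² + c_{t,2}‖A_t^k − A_t^(k+1)‖² ). -/

import Mathlib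

open Matrix Filter Topology

/-- Frobenius inner product `⟨X,Y⟩ = tr(Xᵀ Y)`. -/
noncomputable def finner {α β : Type*} [Fintype α] [Fintype β]
    (X Y : Matrix α β ℝ) : ℝ := (Xᵀ * Y).trace

/-- Squared Frobenius norm `‖X‖² = tr(Xᵀ X)`. -/
noncomputable def fnormSq {α β : Type*} [Fintype α] [Fintype β]
    (X : Matrix α β ℝ) : ℝ := finner X X

/-- Frobenius norm `‖X‖`. -/
noncomputable def fnorm {α β : Type*} [Fintype α] [Fintype β]
    (X : Matrix α β ℝ) : ℝ := Real.sqrt (fnormSq X)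

open Pointwise

section API
variable {α β : Type*} [Fintype α] [Fintype β]

lemma finner_eq_sum (X Y : Matrix α β ℝ) : finner X Y = ∑ j, ∑ i, X i j * Y i j := by
  simp [finner, Matrix.trace, Matrix.diag, Matrix.mul_apply]

lemma finner_comm (X Y : Matrix α β ℝ) : finner X Y = finner Y X := by
  simp [finner_eq_sum, mul_comm]

lemma finner_add_right (X Y Z : Matrix α β ℝ) :
    finner X (Y + Z) = finner X Y + finner X Z := by
  simp [finner_eq_sum, Matrix.add_apply, mul_add, Finset.sum_add_distrib]

lemma finner_smul_right (c : ℝ) (X Y : Matrix α β ℝ) :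
    finner X (c • Y) = c * finner X Y := by
  simp only [finner_eq_sum, Matrix.smul_apply, smul_eq_mul, Finset.mul_sum]
  refine Finset.sum_congr rfl fun j _ => Finset.sum_congr rfl fun i _ => by ring

lemma finner_sub_right (X Y Z : Matrix α β ℝ) :
    finner X (Y - Z) = finner X Y - finner X Z := by
  simp [finner_eq_sum, Matrix.sub_apply, mul_sub, Finset.sum_sub_distrib]

lemma finner_add_left (X Y Z : Matrix α β ℝ) :
    finner (X + Y) Z = finner X Z + finner Y Z := by
  rw [finner_comm, finner_add_right, finner_comm Z X, finner_comm Z Y]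

lemma finner_sub_left (X Y Z : Matrix α β ℝ) :
    finner (X - Y) Z = finner X Z - finner Y Z := by
  rw [finner_comm, finner_sub_right, finner_comm Z X, finner_comm Z Y]

lemma finner_smul_left (c : ℝ) (X Y : Matrix α β ℝ) :
    finner (c • X) Y = c * finner X Y := by
  rw [finner_comm, finner_smul_right, finner_comm]

lemma finner_sum_right {ι : Type*} (s : Finset ι) (X : Matrix α β ℝ)
    (f : ι → Matrix α β ℝ) : finner X (∑ i ∈ s, f i) = ∑ i ∈ s, finner X (f i) := by
  classical
  induction s using Finset.induction with
  | empty => simp [finner_eq_sum]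
  | insert _ _ h ih =>
      rw [Finset.sum_insert h, finner_add_right, ih, Finset.sum_insert h]

lemma fnormSq_nonneg (X : Matrix α β ℝ) : 0 ≤ fnormSq X := by
  rw [fnormSq, finner_eq_sum]
  exact Finset.sum_nonneg fun j _ => Finset.sum_nonneg fun i _ => mul_self_nonneg _

lemma fnormSq_add_smul (X Y : Matrix α β ℝ) (θ : ℝ) :
    fnormSq (X + θ • Y) = fnormSq X + θ * (2 * finner X Y) + θ ^ 2 * fnormSq Y := by
  simp only [fnormSq, finner_add_left, finner_add_right, finner_smul_left, finner_smul_right,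
    finner_comm Y X]
  ring

lemma fnormSq_sub (X Y : Matrix α β ℝ) :
    fnormSq (X - Y) = fnormSq X - 2 * finner X Y + fnormSq Y := by
  simp only [fnormSq, finner_sub_left, finner_sub_right, finner_comm Y X]
  ring

lemma fnormSq_neg (X : Matrix α β ℝ) : fnormSq (-X) = fnormSq X := by
  simp [fnormSq, finner_eq_sum]

lemma fnormSq_zero : fnormSq (0 : Matrix α β ℝ) = 0 := by
  simp [fnormSq, finner_eq_sum]

end API
section Quad
variable {n p r : Type*} [Fintype n] [Fintype p] [Fintype r]

lemma trace_quad_symm {P : Matrix n n ℝ} (hP : Pᵀ = P) (X Y : Matrix n r ℝ) :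
    (Yᵀ * P * X).trace = (Xᵀ * P * Y).trace := by
  conv_lhs => rw [← Matrix.trace_transpose]
  rw [Matrix.transpose_mul, Matrix.transpose_mul, Matrix.transpose_transpose, hP,
    ← Matrix.mul_assoc]

lemma trace_quad_add_smul {P : Matrix n n ℝ} (hP : Pᵀ = P) (X Y : Matrix n r ℝ) (θ : ℝ) :
    ((X + θ • Y)ᵀ * P * (X + θ • Y)).trace
      = (Xᵀ * P * X).trace + θ * (2 * (Xᵀ * P * Y).trace) + θ ^ 2 * (Yᵀ * P * Y).trace := by
  have h := trace_quad_symm hP X Y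
  simp only [Matrix.transpose_add, Matrix.transpose_smul, Matrix.add_mul, Matrix.mul_add,
    Matrix.smul_mul, Matrix.mul_smul, Matrix.trace_add, Matrix.trace_smul, smul_eq_mul,
    smul_smul]
  rw [h]; ring

lemma trace_quad_nonneg {P : Matrix n n ℝ} (hP : P.PosSemidef) (X : Matrix n r ℝ) :
    0 ≤ (Xᵀ * P * X).trace := by
  rw [Matrix.trace]
  refine Finset.sum_nonneg fun j _ => ?_
  have h := hP.dotProduct_mulVec_nonneg (fun i => X i j)
  have hsym : ∀ a b : n, P a b = P b a := by
    intro a b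
    conv_lhs => rw [← hP.1]
    simp [Matrix.conjTranspose_apply]
  have e : (Matrix.diag (Xᵀ * P * X)) j
      = dotProduct (star fun i => X i j) (P *ᵥ fun i => X i j) := by
    simp only [Matrix.diag, Matrix.mul_apply, Matrix.transpose_apply, dotProduct,
      Matrix.mulVec, Pi.star_apply, star_trivial, Finset.sum_mul, Finset.mul_sum]
    rw [Finset.sum_comm]
    refine Finset.sum_congr rfl fun a _ => Finset.sum_congr rfl fun b _ => by
      rw [hsym a b]; ring
  rw [e]
  exact h

lemma fnormSq_eq_trace (X : Matrix n r ℝ) : fnormSq X = (Xᵀ * X).trace := rfl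

lemma trace_quad_tau_rho [DecidableEq n] (τ ρ : ℝ) (Cm : Matrix p n ℝ) (D : Matrix n r ℝ) :
    (Dᵀ * (τ • (1 : Matrix n n ℝ) - ρ • (Cmᵀ * Cm)) * D).trace
      = τ * fnormSq D - ρ * fnormSq (Cm * D) := by
  simp only [Matrix.mul_sub, Matrix.sub_mul, Matrix.mul_smul, Matrix.smul_mul,
    Matrix.mul_one, Matrix.trace_sub, Matrix.trace_smul, smul_eq_mul]
  rw [fnormSq_eq_trace, fnormSq_eq_trace, Matrix.transpose_mul]
  rw [Matrix.mul_assoc Dᵀ (Cmᵀ * Cm) D, Matrix.mul_assoc Cmᵀ Cm D,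
    ← Matrix.mul_assoc Dᵀ Cmᵀ (Cm * D)]

lemma psd_smul_one_sub_of_isGreatest {M : Matrix n n ℝ} [DecidableEq n]
    (hM : M.IsHermitian) {s : ℝ} (hgr : IsGreatest (spectrum ℝ M) s) :
    (s • (1 : Matrix n n ℝ) - M).PosSemidef := by
  have hN : (s • (1 : Matrix n n ℝ) - M).IsHermitian := by
    refine Matrix.IsHermitian.sub ?_ hM
    simp [Matrix.IsHermitian, Matrix.conjTranspose_smul]
  refine (Matrix.IsHermitian.posSemidef_iff_eigenvalues_nonneg hN).mpr fun i => ?_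
  have hmem' : hN.eigenvalues i ∈ ({s} : Set ℝ) - spectrum ℝ M := by
    rw [spectrum.singleton_sub_eq, Algebra.algebraMap_eq_smul_one]
    exact hN.eigenvalues_mem_spectrum_real i
  obtain ⟨x, hx, y, hy, hxy⟩ := Set.mem_sub.mp hmem'
  rw [Set.mem_singleton_iff] at hx
  subst hx
  have h2 := hgr.2 hy
  rw [← hxy]
  exact sub_nonneg.mpr h2

lemma sigma_nonneg_of_isGreatest {Cm : Matrix p n ℝ} [DecidableEq n] {s : ℝ}
    (hgr : IsGreatest (spectrum ℝ (Cmᵀ * Cm)) s) : 0 ≤ s := by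
  cases isEmpty_or_nonempty n with
  | inl h =>
      exfalso
      have hs := hgr.1
      rw [spectrum.mem_iff] at hs
      haveI : Subsingleton (Matrix n n ℝ) :=
        ⟨fun a b => by ext i j; exact (IsEmpty.false i).elim⟩
      exact hs (isUnit_of_subsingleton _)
  | inr h =>
      obtain ⟨i⟩ := h
      have hpsd : (Cmᵀ * Cm).PosSemidef := by
        have := Matrix.posSemidef_conjTranspose_mul_self Cm
        rwa [Matrix.conjTranspose_eq_transpose_of_trivial] at this
      have h1 : 0 ≤ hpsd.1.eigenvalues i := hpsd.eigenvalues_nonneg i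
      have h2 : hpsd.1.eigenvalues i ≤ s := hgr.2 (hpsd.1.eigenvalues_mem_spectrum_real i)
      linarith

lemma fnormSq_mul_le_sigma {Cm : Matrix p n ℝ} [DecidableEq n] {s : ℝ}
    (hgr : IsGreatest (spectrum ℝ (Cmᵀ * Cm)) s) (D : Matrix n r ℝ) :
    fnormSq (Cm * D) ≤ s * fnormSq D := by
  have hherm : (Cmᵀ * Cm).IsHermitian := by
    have := Matrix.posSemidef_conjTranspose_mul_self Cm
    rw [Matrix.conjTranspose_eq_transpose_of_trivial] at this
    exact this.1
  have hpsd := psd_smul_one_sub_of_isGreatest hherm hgr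
  have h := trace_quad_nonneg hpsd D
  have key : (Dᵀ * (s • (1 : Matrix n n ℝ) - Cmᵀ * Cm) * D).trace
      = s * fnormSq D - 1 * fnormSq (Cm * D) := by
    have h2 := trace_quad_tau_rho s 1 Cm D
    rw [one_smul] at h2
    exact h2
  rw [key] at h
  linarith

end Quad

lemma genmin {lin q : ℝ} (hq : 0 ≤ q)
    (h : ∀ θ : ℝ, 0 < θ → θ ≤ 1 → 0 ≤ θ * lin + θ ^ 2 * q) : 0 ≤ lin := by
  by_contra hl
  push_neg at hl
  rcases eq_or_lt_of_le hq with h0 | h0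
  · have := h 1 one_pos le_rfl
    nlinarith
  · set θ := min 1 (-lin / (2 * q)) with hθ
    have hθ0 : 0 < θ := lt_min one_pos (div_pos (by linarith) (by linarith))
    have hθ1 : θ ≤ 1 := min_le_left _ _
    have h2 : θ * q ≤ -lin / 2 := by
      calc θ * q ≤ (-lin / (2 * q)) * q :=
            mul_le_mul_of_nonneg_right (min_le_right _ _) h0.le
        _ = -lin / 2 := by field_simp
    have h3 := h θ hθ0 hθ1
    nlinarith

lemma strong_min {M : Type*} [AddCommGroup M] [Module ℝ M] (G : M → ℝ) (V0 D : M)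
    (lin q : ℝ) (hq : 0 ≤ q)
    (hexp : ∀ θ : ℝ, G (V0 + θ • D) = G V0 + θ * lin + θ ^ 2 * q)
    (hmin : ∀ V, G V0 ≤ G V) : G (V0 + D) - G V0 ≥ q := by
  have h0 : 0 ≤ lin := by
    refine genmin hq fun θ h1 h2 => ?_
    have h3 := hmin (V0 + θ • D)
    rw [hexp θ] at h3
    linarith
  have h1 := hexp 1
  rw [one_pow, one_mul, one_smul] at h1
  linarith

set_option maxHeartbeats 1000000 in
/-- quantitative descent of the augmented Lagrangian per full DMTL-ELM
iteration, with constants `c_{t,1} = τ_t + σ/2 − ρm(δ+½)σ_{t,max}` and `c_{t,2} = ζ_t + σ/2`. -/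
theorem stmt10
    (m E L r d : ℕ) (hm : 1 ≤ m)
    (Nt : Fin m → ℕ)
    (H : ∀ t, Matrix (Fin (Nt t)) (Fin L) ℝ)
    (T : ∀ t, Matrix (Fin (Nt t)) (Fin d) ℝ)
    (C : Fin m → Matrix (Fin E × Fin L) (Fin L) ℝ)
    (μ1 μ2 ρ δ : ℝ) (hμ1 : 0 < μ1) (hμ2 : 0 < μ2) (hρ : 0 < ρ) (hδ : 0 < δ)
    (τ ζ : Fin m → ℝ)
    -- the proximal matrices `P_t = τ_t I − ρ C_tᵀC_t` are positive semidefinite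
    (hPpsd : ∀ t, (τ t • (1 : Matrix (Fin L) (Fin L) ℝ) - ρ • ((C t)ᵀ * C t)).PosSemidef)
    -- `σmax t` is the largest eigenvalue of `C_tᵀC_t`
    (σmax : Fin m → ℝ)
    (hσmax : ∀ t, IsGreatest (spectrum ℝ ((C t)ᵀ * C t)) (σmax t))
    -- `σ` is a strong-convexity modulus of `g1` and `g2`
    (σ : ℝ) (hσ0 : 0 < σ) (hσ : σ ≤ min (μ1 / (m : ℝ)) μ2)
    -- `F t U A = f_t(U,A) + g1(U) + g2(A)`
    (F : Fin m → Matrix (Fin L) (Fin r) ℝ → Matrix (Fin r) (Fin d) ℝ → ℝ)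
    (hF : ∀ t V B, F t V B = (1 / 2) * fnormSq (H t * V * B - T t)
        + (μ1 / (2 * (m : ℝ))) * fnormSq V + (μ2 / 2) * fnormSq B)
    -- the augmented Lagrangian
    (Lag : (Fin m → Matrix (Fin L) (Fin r) ℝ) → (Fin m → Matrix (Fin r) (Fin d) ℝ)
        → Matrix (Fin E × Fin L) (Fin r) ℝ → ℝ)
    (hLag : ∀ V B lm, Lag V B lm = (∑ t, F t (V t) (B t))
        + finner lm (∑ t, C t * V t) + (ρ / 2) * fnormSq (∑ t, C t * V t))
    -- the iterates
    (U : ℕ → Fin m → Matrix (Fin L) (Fin r) ℝ)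
    (A : ℕ → Fin m → Matrix (Fin r) (Fin d) ℝ)
    (lam : ℕ → Matrix (Fin E × Fin L) (Fin r) ℝ)
    (γ : ℕ → Fin E → ℝ)
    -- (i) `U_t^(k+1)` minimizes `U ↦ L(U, (U_i^k)_{i≠t}, A^k, λ^k) + ½‖U − U_t^k‖_{P_t}²`
    (hU : ∀ (k : ℕ) (t : Fin m) (V : Matrix (Fin L) (Fin r) ℝ),
      Lag (Function.update (U k) t (U (k + 1) t)) (A k) (lam k)
        + (1 / 2) * ((U (k + 1) t - U k t)ᵀ
            * (τ t • (1 : Matrix (Fin L) (Fin L) ℝ) - ρ • ((C t)ᵀ * C t))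
            * (U (k + 1) t - U k t)).trace
      ≤ Lag (Function.update (U k) t V) (A k) (lam k)
        + (1 / 2) * ((V - U k t)ᵀ
            * (τ t • (1 : Matrix (Fin L) (Fin L) ℝ) - ρ • ((C t)ᵀ * C t))
            * (V - U k t)).trace)
    -- step-size condition for `γ_i^(k+1)`:
    -- `0 < γ_i^(k+1)` and `γ_i^(k+1) ‖Ĉ_i U^(k+1)‖² ≤ δ ‖Ĉ_i (U^k − U^(k+1))‖²`
    (hγ : ∀ (k : ℕ) (i : Fin E), 0 < γ (k + 1) i ∧
      γ (k + 1) i * fnormSq (∑ t, (C t).submatrix (fun j : Fin L => (i, j)) id * U (k + 1) t)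
        ≤ δ * fnormSq (∑ t, (C t).submatrix (fun j : Fin L => (i, j)) id
            * (U k t - U (k + 1) t)))
    -- (ii) dual update `λ^(k+1) = λ^k − ρ γ^(k+1) Σ_t C_t U_t^(k+1)`
    (hlam : ∀ k : ℕ, lam (k + 1) = lam k
        - ρ • Matrix.of (fun (p : Fin E × Fin L) (j : Fin r) =>
            γ (k + 1) p.1 * (∑ t, C t * U (k + 1) t) p j))
    -- (iii) `A_t^(k+1)` minimizes `A ↦ F_t(U_t^(k+1), A) + ½‖A − A_t^k‖_{Q_t}²`
    (hA : ∀ (k : ℕ) (t : Fin m) (B : Matrix (Fin r) (Fin d) ℝ),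
      F t (U (k + 1) t) (A (k + 1) t) + (ζ t / 2) * fnormSq (A (k + 1) t - A k t)
      ≤ F t (U (k + 1) t) B + (ζ t / 2) * fnormSq (B - A k t))
    (hτ : ∀ t, ρ * (m : ℝ) * (δ + 1 / 2) * σmax t - σ / 2 ≤ τ t)
    (hζ : ∀ t, 0 ≤ ζ t)
 :
    ∀ k : ℕ, Lag (U k) (A k) (lam k) - Lag (U (k + 1)) (A (k + 1)) (lam (k + 1))
      ≥ ∑ t, ((τ t + σ / 2 - ρ * (m : ℝ) * (δ + 1 / 2) * σmax t)
            * fnormSq (U k t - U (k + 1) t)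
          + (ζ t + σ / 2) * fnormSq (A k t - A (k + 1) t)) := by
  intro k
  -- basic scalar facts
  have hm1 : (1 : ℝ) ≤ (m : ℝ) := by exact_mod_cast hm
  have hmpos : (0 : ℝ) < (m : ℝ) := by linarith
  have hσμ2 : σ ≤ μ2 := hσ.trans (min_le_right _ _)
  have hσμ1 : σ / 2 ≤ μ1 / (2 * (m : ℝ)) := by
    have h1 : σ ≤ μ1 / (m : ℝ) := hσ.trans (min_le_left _ _)
    have h2 : μ1 / (2 * (m : ℝ)) = (μ1 / (m : ℝ)) / 2 := by
      rw [div_div, mul_comm]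
    linarith
  have hPsym : ∀ t, (τ t • (1 : Matrix (Fin L) (Fin L) ℝ) - ρ • ((C t)ᵀ * C t))ᵀ
      = τ t • (1 : Matrix (Fin L) (Fin L) ℝ) - ρ • ((C t)ᵀ * C t) := by
    intro t
    have h := (hPpsd t).1
    rwa [Matrix.IsHermitian, Matrix.conjTranspose_eq_transpose_of_trivial] at h
  -- sum-splitting helpers
  have hsplitF : ∀ (t : Fin m) (W : Matrix (Fin L) (Fin r) ℝ),
      (∑ s, F s (Function.update (U k) t W s) (A k s))
        = F t W (A k t) + ∑ s ∈ Finset.univ.erase t, F s (U k s) (A k s) := by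
    intro t W
    rw [← Finset.add_sum_erase Finset.univ _ (Finset.mem_univ t), Function.update_self]
    congr 1
    exact Finset.sum_congr rfl fun s hs => by
      rw [Function.update_of_ne (Finset.ne_of_mem_erase hs)]
  have hsplitC : ∀ (t : Fin m) (W : Matrix (Fin L) (Fin r) ℝ),
      (∑ s, C s * Function.update (U k) t W s)
        = C t * W + ∑ s ∈ Finset.univ.erase t, C s * U k s := by
    intro t W
    rw [← Finset.add_sum_erase Finset.univ _ (Finset.mem_univ t), Function.update_self]
    congr 1
    exact Finset.sum_congr rfl fun s hs => by
      rw [Function.update_of_ne (Finset.ne_of_mem_erase hs)]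
  -- per-task key inequality for the U-update
  have hUkey : ∀ t : Fin m,
      Lag (U k) (A k) (lam k)
        - Lag (Function.update (U k) t (U (k + 1) t)) (A k) (lam k)
      ≥ (1 / 2) * fnormSq (H t * (U k t - U (k + 1) t) * A k t)
        + (μ1 / (2 * (m : ℝ))) * fnormSq (U k t - U (k + 1) t)
        + (ρ / 2) * fnormSq (C t * (U k t - U (k + 1) t))
        + ((U k t - U (k + 1) t)ᵀ
            * (τ t • (1 : Matrix (Fin L) (Fin L) ℝ) - ρ • ((C t)ᵀ * C t))
            * (U k t - U (k + 1) t)).trace := by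
    intro t
    have hq : 0 ≤ (1 / 2) * fnormSq (H t * (U k t - U (k + 1) t) * A k t)
        + (μ1 / (2 * (m : ℝ))) * fnormSq (U k t - U (k + 1) t)
        + (ρ / 2) * fnormSq (C t * (U k t - U (k + 1) t))
        + (1 / 2) * ((U k t - U (k + 1) t)ᵀ
            * (τ t • (1 : Matrix (Fin L) (Fin L) ℝ) - ρ • ((C t)ᵀ * C t))
            * (U k t - U (k + 1) t)).trace := by
      have n1 := fnormSq_nonneg (H t * (U k t - U (k + 1) t) * A k t)
      have n2 := fnormSq_nonneg (U k t - U (k + 1) t)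
      have n3 := fnormSq_nonneg (C t * (U k t - U (k + 1) t))
      have n4 := trace_quad_nonneg (hPpsd t) (U k t - U (k + 1) t)
      have c2 : 0 ≤ μ1 / (2 * (m : ℝ)) := by positivity
      have c3 : 0 ≤ ρ / 2 := by positivity
      nlinarith [mul_nonneg c2 n2, mul_nonneg c3 n3]
    have key := strong_min
      (fun V => Lag (Function.update (U k) t V) (A k) (lam k)
        + (1 / 2) * ((V - U k t)ᵀ
            * (τ t • (1 : Matrix (Fin L) (Fin L) ℝ) - ρ • ((C t)ᵀ * C t))
            * (V - U k t)).trace)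
      (U (k + 1) t) (U k t - U (k + 1) t)
      ((1 / 2) * (2 * finner (H t * U (k + 1) t * A k t - T t)
            (H t * (U k t - U (k + 1) t) * A k t))
        + (μ1 / (2 * (m : ℝ))) * (2 * finner (U (k + 1) t) (U k t - U (k + 1) t))
        + finner (lam k) (C t * (U k t - U (k + 1) t))
        + (ρ / 2) * (2 * finner (C t * U (k + 1) t + ∑ s ∈ Finset.univ.erase t, C s * U k s)
            (C t * (U k t - U (k + 1) t)))
        + (1 / 2) * (2 * ((U (k + 1) t - U k t)ᵀ
            * (τ t • (1 : Matrix (Fin L) (Fin L) ℝ) - ρ • ((C t)ᵀ * C t))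
            * (U k t - U (k + 1) t)).trace))
      ((1 / 2) * fnormSq (H t * (U k t - U (k + 1) t) * A k t)
        + (μ1 / (2 * (m : ℝ))) * fnormSq (U k t - U (k + 1) t)
        + (ρ / 2) * fnormSq (C t * (U k t - U (k + 1) t))
        + (1 / 2) * ((U k t - U (k + 1) t)ᵀ
            * (τ t • (1 : Matrix (Fin L) (Fin L) ℝ) - ρ • ((C t)ᵀ * C t))
            * (U k t - U (k + 1) t)).trace)
      hq
      (fun θ => by
        rw [hLag, hLag, hsplitF, hsplitF, hsplitC, hsplitC, hF, hF]
        have e1 : H t * (U (k + 1) t + θ • (U k t - U (k + 1) t)) * A k t - T t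
            = (H t * U (k + 1) t * A k t - T t)
              + θ • (H t * (U k t - U (k + 1) t) * A k t) := by
          rw [Matrix.mul_add, Matrix.mul_smul, Matrix.add_mul, Matrix.smul_mul,
            add_sub_right_comm]
        have e2 : C t * (U (k + 1) t + θ • (U k t - U (k + 1) t))
              + ∑ s ∈ Finset.univ.erase t, C s * U k s
            = (C t * U (k + 1) t + ∑ s ∈ Finset.univ.erase t, C s * U k s)
              + θ • (C t * (U k t - U (k + 1) t)) := by
          rw [Matrix.mul_add, Matrix.mul_smul, add_right_comm]
        have e3 : (U (k + 1) t + θ • (U k t - U (k + 1) t)) - U k t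
            = (U (k + 1) t - U k t) + θ • (U k t - U (k + 1) t) :=
          add_sub_right_comm _ _ _
        rw [e1, e2, e3, fnormSq_add_smul, fnormSq_add_smul, fnormSq_add_smul,
          finner_add_right, finner_smul_right, trace_quad_add_smul (hPsym t)]
        ring)
      (fun V => hU k t V)
    -- now rewrite `key`
    have hv : U (k + 1) t + (U k t - U (k + 1) t) = U k t := by abel
    beta_reduce at key
    rw [hv, Function.update_eq_self, sub_self] at key
    have hneg : U (k + 1) t - U k t = -(U k t - U (k + 1) t) := by abel
    rw [hneg] at key
    simp only [Matrix.transpose_zero, Matrix.zero_mul, Matrix.trace_zero, mul_zero,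
      add_zero, Matrix.transpose_neg, Matrix.neg_mul, Matrix.mul_neg, neg_neg,
      Matrix.trace_neg] at key
    linarith
  -- expansions of the Lagrangian
  have hXR : ∀ t : Fin m, C t * U (k + 1) t + ∑ s ∈ Finset.univ.erase t, C s * U k s
      = (∑ s, C s * U k s) - C t * (U k t - U (k + 1) t) := by
    intro t
    rw [← Finset.add_sum_erase Finset.univ (fun s => C s * U k s) (Finset.mem_univ t),
      Matrix.mul_sub]
    abel
  have hSn : (∑ s, C s * U (k + 1) s)
      = (∑ s, C s * U k s) - ∑ s, C s * (U k s - U (k + 1) s) := by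
    rw [← Finset.sum_sub_distrib]
    exact Finset.sum_congr rfl fun s _ => by rw [Matrix.mul_sub]; abel
  have hdiff_upd : ∀ t : Fin m,
      Lag (U k) (A k) (lam k) - Lag (Function.update (U k) t (U (k + 1) t)) (A k) (lam k)
      = F t (U k t) (A k t) - F t (U (k + 1) t) (A k t)
        + finner (lam k) (C t * (U k t - U (k + 1) t))
        + ρ * finner (∑ s, C s * U k s) (C t * (U k t - U (k + 1) t))
        - (ρ / 2) * fnormSq (C t * (U k t - U (k + 1) t)) := by
    intro t
    rw [hLag, hLag, hsplitF, hsplitC, hXR t, finner_sub_right, fnormSq_sub,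
      Finset.sum_erase_eq_sub (Finset.mem_univ t)]
    ring
  have hper : ∀ t : Fin m, (σ / 2 + τ t) * fnormSq (U k t - U (k + 1) t)
      ≤ F t (U k t) (A k t) - F t (U (k + 1) t) (A k t)
        + finner (lam k) (C t * (U k t - U (k + 1) t))
        + ρ * finner (∑ s, C s * U k s) (C t * (U k t - U (k + 1) t)) := by
    intro t
    have h1 := hUkey t
    rw [hdiff_upd t] at h1
    have h2 := trace_quad_tau_rho (τ t) ρ (C t) (U k t - U (k + 1) t)
    rw [h2] at h1
    have h3 : (σ / 2) * fnormSq (U k t - U (k + 1) t)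
        ≤ (μ1 / (2 * (m : ℝ))) * fnormSq (U k t - U (k + 1) t) :=
      mul_le_mul_of_nonneg_right hσμ1 (fnormSq_nonneg _)
    have h4 := fnormSq_nonneg (H t * (U k t - U (k + 1) t) * A k t)
    linarith
  have hfull : Lag (U k) (A k) (lam k) - Lag (U (k + 1)) (A k) (lam k)
      = (∑ t, (F t (U k t) (A k t) - F t (U (k + 1) t) (A k t)
          + finner (lam k) (C t * (U k t - U (k + 1) t))
          + ρ * finner (∑ s, C s * U k s) (C t * (U k t - U (k + 1) t))))
        - (ρ / 2) * fnormSq (∑ s, C s * (U k s - U (k + 1) s)) := by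
    rw [hLag, hLag, hSn, finner_sub_right, fnormSq_sub,
      finner_sum_right Finset.univ (lam k) (fun s => C s * (U k s - U (k + 1) s)),
      finner_sum_right Finset.univ (∑ s, C s * U k s)
        (fun s => C s * (U k s - U (k + 1) s))]
    simp only [Finset.sum_add_distrib, Finset.sum_sub_distrib, ← Finset.mul_sum]
    ring
  -- Cauchy-Schwarz for the coupling term
  have hCS : fnormSq (∑ s, C s * (U k s - U (k + 1) s))
      ≤ (m : ℝ) * ∑ s, fnormSq (C s * (U k s - U (k + 1) s)) := by
    have hb : ∀ (j : Fin r) (p : Fin E × Fin L),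
        (∑ s, C s * (U k s - U (k + 1) s)) p j * (∑ s, C s * (U k s - U (k + 1) s)) p j
        ≤ (m : ℝ) * ∑ s, ((C s * (U k s - U (k + 1) s)) p j
              * (C s * (U k s - U (k + 1) s)) p j) := by
      intro j p
      rw [Matrix.sum_apply, ← pow_two]
      have := sq_sum_le_card_mul_sum_sq
        (s := Finset.univ) (f := fun s => (C s * (U k s - U (k + 1) s)) p j)
      simp only [Finset.card_univ, Fintype.card_fin] at this
      calc (∑ s, (C s * (U k s - U (k + 1) s)) p j) ^ 2
          ≤ (m : ℝ) * ∑ s, ((C s * (U k s - U (k + 1) s)) p j) ^ 2 := this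
        _ = (m : ℝ) * ∑ s, ((C s * (U k s - U (k + 1) s)) p j
              * (C s * (U k s - U (k + 1) s)) p j) := by
            congr 1; exact Finset.sum_congr rfl fun s _ => by rw [pow_two]
    rw [fnormSq, finner_eq_sum]
    calc ∑ j, ∑ p, ((∑ s, C s * (U k s - U (k + 1) s)) p j
            * (∑ s, C s * (U k s - U (k + 1) s)) p j)
        ≤ ∑ j, ∑ p, ((m : ℝ) * ∑ s, ((C s * (U k s - U (k + 1) s)) p j
            * (C s * (U k s - U (k + 1) s)) p j)) :=
          Finset.sum_le_sum fun j _ => Finset.sum_le_sum fun p _ => hb j p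
      _ = ∑ j, ((m : ℝ) * ∑ p, ∑ s, ((C s * (U k s - U (k + 1) s)) p j
            * (C s * (U k s - U (k + 1) s)) p j)) :=
          Finset.sum_congr rfl fun j _ => (Finset.mul_sum _ _ _).symm
      _ = (m : ℝ) * ∑ j, ∑ p, ∑ s, ((C s * (U k s - U (k + 1) s)) p j
            * (C s * (U k s - U (k + 1) s)) p j) := (Finset.mul_sum _ _ _).symm
      _ = (m : ℝ) * ∑ j, ∑ s, ∑ p, ((C s * (U k s - U (k + 1) s)) p j
            * (C s * (U k s - U (k + 1) s)) p j) := by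
          congr 1
          exact Finset.sum_congr rfl fun j _ => Finset.sum_comm
      _ = (m : ℝ) * ∑ s, ∑ j, ∑ p, ((C s * (U k s - U (k + 1) s)) p j
            * (C s * (U k s - U (k + 1) s)) p j) := by
          congr 1
          exact Finset.sum_comm
      _ = (m : ℝ) * ∑ s, fnormSq (C s * (U k s - U (k + 1) s)) := by
          congr 1
  -- stage 1
  have hXb : ∀ t : Fin m, fnormSq (C t * (U k t - U (k + 1) t))
      ≤ σmax t * fnormSq (U k t - U (k + 1) t) :=
    fun t => fnormSq_mul_le_sigma (hσmax t) _
  have hσpos : ∀ t : Fin m, 0 ≤ σmax t := fun t => sigma_nonneg_of_isGreatest (hσmax t)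
  have stage1 : Lag (U k) (A k) (lam k) - Lag (U (k + 1)) (A k) (lam k)
      ≥ ∑ t, (τ t + σ / 2 - ρ * (m : ℝ) * (δ + 1 / 2) * σmax t)
          * fnormSq (U k t - U (k + 1) t) := by
    rw [hfull]
    have hsum_per := Finset.sum_le_sum fun t (_ : t ∈ Finset.univ) => hper t
    have hXsum : (∑ s, fnormSq (C s * (U k s - U (k + 1) s)))
        ≤ ∑ s, σmax s * fnormSq (U k s - U (k + 1) s) :=
      Finset.sum_le_sum fun s _ => hXb s
    have h4 : (ρ / 2) * fnormSq (∑ s, C s * (U k s - U (k + 1) s))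
        ≤ (ρ / 2) * ((m : ℝ) * ∑ s, σmax s * fnormSq (U k s - U (k + 1) s)) := by
      refine mul_le_mul_of_nonneg_left ?_ (by positivity)
      exact hCS.trans (mul_le_mul_of_nonneg_left hXsum (by positivity))
    have h5 : 0 ≤ (ρ * (m : ℝ) * δ) * ∑ s, σmax s * fnormSq (U k s - U (k + 1) s) := by
      refine mul_nonneg (by positivity) ?_
      exact Finset.sum_nonneg fun s _ => mul_nonneg (hσpos s) (fnormSq_nonneg _)
    have hc1 : (∑ t, ((σ / 2 + τ t) * fnormSq (U k t - U (k + 1) t)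
          - ρ * (m : ℝ) * (δ + 1 / 2) * (σmax t * fnormSq (U k t - U (k + 1) t))))
        = ∑ t, (τ t + σ / 2 - ρ * (m : ℝ) * (δ + 1 / 2) * σmax t)
            * fnormSq (U k t - U (k + 1) t) :=
      Finset.sum_congr rfl fun t _ => by ring
    have hc2 : (∑ t, ((σ / 2 + τ t) * fnormSq (U k t - U (k + 1) t)
          - ρ * (m : ℝ) * (δ + 1 / 2) * (σmax t * fnormSq (U k t - U (k + 1) t))))
        = (∑ t, (σ / 2 + τ t) * fnormSq (U k t - U (k + 1) t))
          - ∑ t, ρ * (m : ℝ) * (δ + 1 / 2) * (σmax t * fnormSq (U k t - U (k + 1) t)) :=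
      Finset.sum_sub_distrib _ _
    have hc3 : (∑ t, ρ * (m : ℝ) * (δ + 1 / 2) * (σmax t * fnormSq (U k t - U (k + 1) t)))
        = ρ * (m : ℝ) * (δ + 1 / 2) * ∑ s, σmax s * fnormSq (U k s - U (k + 1) s) :=
      (Finset.mul_sum _ _ _).symm
    rw [← hc1, hc2, hc3]
    linarith
  -- stage 2 : dual update does not increase the Lagrangian difference
  have stage2 : Lag (U (k + 1)) (A k) (lam k) - Lag (U (k + 1)) (A k) (lam (k + 1)) ≥ 0 := by
    rw [hLag, hLag]
    have h1 : finner (lam k) (∑ t, C t * U (k + 1) t)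
          - finner (lam (k + 1)) (∑ t, C t * U (k + 1) t)
        = finner (lam k - lam (k + 1)) (∑ t, C t * U (k + 1) t) :=
      (finner_sub_left _ _ _).symm
    have h2 : lam k - lam (k + 1)
        = ρ • Matrix.of (fun (p : Fin E × Fin L) (j : Fin r) =>
            γ (k + 1) p.1 * (∑ t, C t * U (k + 1) t) p j) := by
      rw [hlam k]; abel
    have h3 : 0 ≤ finner (lam k - lam (k + 1)) (∑ t, C t * U (k + 1) t) := by
      rw [h2, finner_smul_left, finner_eq_sum]
      refine mul_nonneg hρ.le ?_
      refine Finset.sum_nonneg fun j _ => Finset.sum_nonneg fun p _ => ?_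
      rw [Matrix.of_apply, mul_assoc]
      exact mul_nonneg (hγ k p.1).1.le (mul_self_nonneg _)
    linarith
  -- stage 3 : A-update
  have stage3per : ∀ t : Fin m,
      F t (U (k + 1) t) (A k t) - F t (U (k + 1) t) (A (k + 1) t)
        ≥ (ζ t + σ / 2) * fnormSq (A k t - A (k + 1) t) := by
    intro t
    have hq : 0 ≤ (1 / 2) * fnormSq (H t * U (k + 1) t * (A k t - A (k + 1) t))
        + (μ2 / 2) * fnormSq (A k t - A (k + 1) t)
        + (ζ t / 2) * fnormSq (A k t - A (k + 1) t) := by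
      have n1 := fnormSq_nonneg (H t * U (k + 1) t * (A k t - A (k + 1) t))
      have n2 := fnormSq_nonneg (A k t - A (k + 1) t)
      have := hζ t
      nlinarith
    have key := strong_min
      (fun B => F t (U (k + 1) t) B + (ζ t / 2) * fnormSq (B - A k t))
      (A (k + 1) t) (A k t - A (k + 1) t)
      ((1 / 2) * (2 * finner (H t * U (k + 1) t * A (k + 1) t - T t)
            (H t * U (k + 1) t * (A k t - A (k + 1) t)))
        + (μ2 / 2) * (2 * finner (A (k + 1) t) (A k t - A (k + 1) t))
        + (ζ t / 2) * (2 * finner (A (k + 1) t - A k t) (A k t - A (k + 1) t)))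
      ((1 / 2) * fnormSq (H t * U (k + 1) t * (A k t - A (k + 1) t))
        + (μ2 / 2) * fnormSq (A k t - A (k + 1) t)
        + (ζ t / 2) * fnormSq (A k t - A (k + 1) t))
      hq
      (fun θ => by
        rw [hF, hF]
        have e1 : H t * U (k + 1) t * (A (k + 1) t + θ • (A k t - A (k + 1) t)) - T t
            = (H t * U (k + 1) t * A (k + 1) t - T t)
              + θ • (H t * U (k + 1) t * (A k t - A (k + 1) t)) := by
          rw [Matrix.mul_add, Matrix.mul_smul, add_sub_right_comm]
        have e3 : (A (k + 1) t + θ • (A k t - A (k + 1) t)) - A k t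
            = (A (k + 1) t - A k t) + θ • (A k t - A (k + 1) t) :=
          add_sub_right_comm _ _ _
        rw [e1, e3, fnormSq_add_smul, fnormSq_add_smul, fnormSq_add_smul]
        ring)
      (fun B => hA k t B)
    have hv : A (k + 1) t + (A k t - A (k + 1) t) = A k t := by abel
    beta_reduce at key
    rw [hv, sub_self] at key
    have hneg : A (k + 1) t - A k t = -(A k t - A (k + 1) t) := by abel
    rw [hneg, fnormSq_neg, fnormSq_zero, mul_zero, add_zero] at key
    have h3 : (σ / 2) * fnormSq (A k t - A (k + 1) t)
        ≤ (μ2 / 2) * fnormSq (A k t - A (k + 1) t) :=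
      mul_le_mul_of_nonneg_right (by linarith) (fnormSq_nonneg _)
    have h4 := fnormSq_nonneg (H t * U (k + 1) t * (A k t - A (k + 1) t))
    linarith
  have stage3 : Lag (U (k + 1)) (A k) (lam (k + 1)) - Lag (U (k + 1)) (A (k + 1)) (lam (k + 1))
      ≥ ∑ t, (ζ t + σ / 2) * fnormSq (A k t - A (k + 1) t) := by
    rw [hLag, hLag]
    have h1 := Finset.sum_le_sum fun t (_ : t ∈ Finset.univ) => stage3per t
    rw [Finset.sum_sub_distrib] at h1
    linarith
  -- final assembly
  have hsplit : ∑ t, ((τ t + σ / 2 - ρ * (m : ℝ) * (δ + 1 / 2) * σmax t)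
            * fnormSq (U k t - U (k + 1) t)
          + (ζ t + σ / 2) * fnormSq (A k t - A (k + 1) t))
      = (∑ t, (τ t + σ / 2 - ρ * (m : ℝ) * (δ + 1 / 2) * σmax t)
            * fnormSq (U k t - U (k + 1) t))
        + ∑ t, (ζ t + σ / 2) * fnormSq (A k t - A (k + 1) t) :=
    Finset.sum_add_distrib
  rw [ge_iff_le, hsplit]
  linarith
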